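/- arXiv:math/0603407 — 2 statements merged into one kernel-verified Lean document; each statement's English description precedes it below -/
import Mathlib

section
/- For the symmetrized Poisson-type cumulant H(t) = e^t + e^{−t} − 2, the Legendre transform L(v) = sup_{t∈ℝ}(tv − H(t)) satisfies lim_{ε→0} (ε/|log ε|)·L(v/ε) = |v| for every v ∈ ℝ. -/
open Filter Topology Real

/-- For the symmetrized Poisson-type cumulant `H t = e^t + e^{-t} - 2` and its
Legendre transform `L v = sup_t (t*v - H t)`, with `q ε = ε/|log ε|`,
`lim_{ε→0+} q ε * L (v/ε) = |v|`. -/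
theorem poisson_rate_limit (H L : ℝ → ℝ)
    (hH : ∀ t : ℝ, H t = Real.exp t + Real.exp (-t) - 2)
    (hL : ∀ v : ℝ, L v = ⨆ t : ℝ, (t * v - H t)) (v : ℝ) :
    Tendsto (fun ε : ℝ => ε / |Real.log ε| * L (v / ε)) (𝓝[>] 0) (𝓝 |v|) := by
  -- pointwise upper bound for w > 0
  have hub : ∀ w : ℝ, 0 < w → ∀ t : ℝ, t * w - H t ≤ w * Real.log w - w + 2 := by
    intro w hw t
    have h1 : (t - Real.log w) + 1 ≤ Real.exp (t - Real.log w) := Real.add_one_le_exp _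
    have h2 : Real.exp (t - Real.log w) = Real.exp t / w := by
      rw [Real.exp_sub, Real.exp_log hw]
    have h3 : 0 < Real.exp (-t) := Real.exp_pos _
    rw [h2] at h1
    have h4 : ((t - Real.log w) + 1) * w ≤ Real.exp t := by
      have := mul_le_mul_of_nonneg_right h1 hw.le
      rwa [div_mul_cancel₀ _ hw.ne'] at this
    rw [hH]
    nlinarith [h3, h4]
  have hbdd : ∀ w : ℝ, 0 < w → BddAbove (Set.range fun t : ℝ => t * w - H t) :=
    fun w hw => ⟨w * Real.log w - w + 2, by rintro y ⟨t, rfl⟩; exact hub w hw t⟩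
  have hLub : ∀ w : ℝ, 0 < w → L w ≤ w * Real.log w - w + 2 := by
    intro w hw
    rw [hL]
    exact ciSup_le (hub w hw)
  have hLlb : ∀ w : ℝ, 0 < w → w * Real.log w - w - 1 / w + 2 ≤ L w := by
    intro w hw
    rw [hL]
    have h := le_ciSup (hbdd w hw) (Real.log w)
    calc w * Real.log w - w - 1/w + 2
        = Real.log w * w - H (Real.log w) := by
          rw [hH, Real.exp_log hw, Real.exp_neg, Real.exp_log hw]; ring
      _ ≤ _ := h
  have hLeven : ∀ w : ℝ, L (-w) = L w := by
    intro w
    rw [hL, hL]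
    show sSup (Set.range fun t : ℝ => t * -w - H t)
        = sSup (Set.range fun t : ℝ => t * w - H t)
    congr 1
    ext y
    constructor
    · rintro ⟨t, rfl⟩
      exact ⟨-t, by simp only [hH, neg_neg]; ring⟩
    · rintro ⟨t, rfl⟩
      exact ⟨-t, by simp only [hH, neg_neg]; ring⟩
  rcases eq_or_ne v 0 with rfl | hv
  · -- v = 0 case
    have hH0 : ∀ t, 0 ≤ H t := by
      intro t
      rw [hH]
      nlinarith [Real.add_one_le_exp t, Real.add_one_le_exp (-t)]
    have hL0 : L 0 = 0 := by
      rw [hL]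
      apply le_antisymm
      · apply ciSup_le
        intro t
        have := hH0 t
        simp only [mul_zero, zero_sub]
        linarith
      · have hb : BddAbove (Set.range fun t : ℝ => t * 0 - H t) :=
          ⟨0, by rintro y ⟨t, rfl⟩; have := hH0 t; simp only [mul_zero, zero_sub]; linarith⟩
        have h := le_ciSup hb 0
        have h0 : (0:ℝ) * 0 - H 0 = 0 := by rw [hH]; norm_num
        linarith [h, h0]
    simp only [zero_div, hL0, mul_zero, abs_zero]
    exact tendsto_const_nhds
  · -- v ≠ 0
    set c := |v| with hc_def
    have hc : 0 < c := abs_pos.mpr hv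
    have hev : ∀ᶠ ε in 𝓝[>] (0:ℝ), ε ∈ Set.Ioo (0:ℝ) 1 :=
      Ioo_mem_nhdsGT_of_mem (by norm_num)
    -- simplified bounding functions
    set lo : ℝ → ℝ := fun ε => c + (c * Real.log c - c - ε * ε / c + 2 * ε) / (-Real.log ε)
      with hlo_def
    set hi : ℝ → ℝ := fun ε => c + (c * Real.log c - c + 2 * ε) / (-Real.log ε) with hhi_def
    have hden : Tendsto (fun ε : ℝ => -Real.log ε) (𝓝[>] 0) atTop :=
      tendsto_neg_atBot_atTop.comp Real.tendsto_log_nhdsGT_zero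
    have hlot : Tendsto lo (𝓝[>] 0) (𝓝 c) := by
      have hnum : Tendsto (fun ε : ℝ => c * Real.log c - c - ε * ε / c + 2 * ε) (𝓝[>] 0)
          (𝓝 (c * Real.log c - c)) := by
        have : Continuous (fun ε : ℝ => c * Real.log c - c - ε * ε / c + 2 * ε) := by
          continuity
        have h := (this.tendsto 0).mono_left (nhdsWithin_le_nhds (s := Set.Ioi (0:ℝ)))
        simpa using h
      have hz := hnum.div_atTop hden
      have h2 : Tendsto (fun ε : ℝ => c + (c * Real.log c - c - ε * ε / c + 2 * ε) / (-Real.log ε))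
          (𝓝[>] 0) (𝓝 (c + 0)) := Tendsto.add tendsto_const_nhds hz
      simpa [hlo_def] using h2
    have hhit : Tendsto hi (𝓝[>] 0) (𝓝 c) := by
      have hnum : Tendsto (fun ε : ℝ => c * Real.log c - c + 2 * ε) (𝓝[>] 0)
          (𝓝 (c * Real.log c - c)) := by
        have : Continuous (fun ε : ℝ => c * Real.log c - c + 2 * ε) := by continuity
        have h := (this.tendsto 0).mono_left (nhdsWithin_le_nhds (s := Set.Ioi (0:ℝ)))
        simpa using h
      have hz := hnum.div_atTop hden
      have h2 : Tendsto (fun ε : ℝ => c + (c * Real.log c - c + 2 * ε) / (-Real.log ε))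
          (𝓝[>] 0) (𝓝 (c + 0)) := Tendsto.add tendsto_const_nhds hz
      simpa [hhi_def] using h2
    have key : ∀ ε : ℝ, ε ∈ Set.Ioo (0:ℝ) 1 →
        lo ε ≤ ε / |Real.log ε| * L (v / ε) ∧ ε / |Real.log ε| * L (v / ε) ≤ hi ε := by
      intro ε hε
      obtain ⟨hε0, hε1⟩ := hε
      have hlogneg : Real.log ε < 0 := Real.log_neg hε0 hε1
      have habs : |Real.log ε| = -Real.log ε := abs_of_neg hlogneg
      have hW : 0 < c / ε := div_pos hc hε0
      have hA : 0 < ε / (-Real.log ε) := div_pos hε0 (neg_pos.mpr hlogneg)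
      have hLv : L (v / ε) = L (c / ε) := by
        rcases abs_cases v with ⟨h1, _⟩ | ⟨h1, _⟩
        · rw [hc_def, h1]
        · have : v / ε = -(c / ε) := by rw [hc_def, h1]; ring
          rw [this, hLeven]
      have hlogW : Real.log (c / ε) = Real.log c - Real.log ε :=
        Real.log_div hc.ne' hε0.ne'
      have hloeq : lo ε = ε / (-Real.log ε) *
          ((c/ε) * Real.log (c/ε) - c/ε - 1/(c/ε) + 2) := by
        rw [hlogW, hlo_def]
        field_simp [hε0.ne', hc.ne', hlogneg.ne]
        ring
      have hhieq : hi ε = ε / (-Real.log ε) * ((c/ε) * Real.log (c/ε) - c/ε + 2) := by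
        rw [hlogW, hhi_def]
        field_simp [hε0.ne', hc.ne', hlogneg.ne]
        ring
      constructor
      · rw [habs, hLv, hloeq]
        exact mul_le_mul_of_nonneg_left (hLlb _ hW) hA.le
      · rw [habs, hLv, hhieq]
        exact mul_le_mul_of_nonneg_left (hLub _ hW) hA.le
    have := tendsto_of_tendsto_of_tendsto_of_le_of_le' hlot hhit
      (hev.mono fun ε hε => (key ε hε).1) (hev.mono fun ε hε => (key ε hε).2)
    exact this
end

section
/- The minimum of (1/2)Σ_{k=1}^{M} w_k² over all real sequences (w_k)_{1≤k≤M} such that the solution of u_0 = 0, u_k = a u_{k−1} + w_k satisfies max_{1≤k≤M} |u_k| ≥ 1, equals 1/(2 Σ_{k=0}^{M−1} a^{2k}), for any a with |a| ≤ 1, a ≠ 0. -/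
lemma sum_rec (a : ℝ) (w : ℕ → ℝ) (k : ℕ) (hk : 1 ≤ k) :
    ∑ j ∈ Finset.Icc 1 k, a ^ (k - j) * w j
      = a * (∑ j ∈ Finset.Icc 1 (k - 1), a ^ (k - 1 - j) * w j) + w k := by
  obtain ⟨n, rfl⟩ : ∃ n, k = n + 1 := ⟨k - 1, by omega⟩
  simp only [Nat.add_sub_cancel]
  rw [Finset.mul_sum, Finset.sum_Icc_succ_top (by omega : 1 ≤ n + 1)]
  simp only [Nat.sub_self, pow_zero, one_mul]
  congr 1
  refine Finset.sum_congr rfl fun j hj => ?_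
  have hj' : j ≤ n := (Finset.mem_Icc.mp hj).2
  rw [← mul_assoc, show n + 1 - j = (n - j) + 1 by omega, pow_succ]
  ring

lemma u_closed (a : ℝ) (w u : ℕ → ℝ) (h0 : u 0 = 0)
    (hrec : ∀ k, 1 ≤ k → u k = a * u (k - 1) + w k) :
    ∀ k, u k = ∑ j ∈ Finset.Icc 1 k, a ^ (k - j) * w j := by
  intro k
  induction k with
  | zero => simpa using h0
  | succ n ih =>
    rw [hrec (n+1) (by omega), sum_rec a w (n+1) (by omega)]
    simp only [Nat.add_sub_cancel]
    rw [ih]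

lemma sum_reindex (a : ℝ) (k : ℕ) :
    ∑ j ∈ Finset.Icc 1 k, a ^ (2 * (k - j)) = ∑ i ∈ Finset.range k, a ^ (2 * i) := by
  rw [← Finset.Ico_add_one_right_eq_Icc, Finset.sum_Ico_eq_sum_range]
  rw [← Finset.sum_range_reflect]
  refine Finset.sum_congr rfl fun i hi => ?_
  have : i < k := by simpa using Finset.mem_range.mp hi
  congr 2
  omega

/-- The minimum of `(1/2) Σ_{k=1}^M w_k²` over all controls `w` for which the
solution of `u_0 = 0`, `u_k = a u_{k-1} + w_k` exits `(-1,1)` by time `M`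
equals `1/(2 Σ_{k=0}^{M-1} a^{2k})`, for `0 < |a| ≤ 1`. -/
theorem exit_cost_minimum
    (a : ℝ) (ha0 : a ≠ 0) (ha : |a| ≤ 1) (M : ℕ) (hM : 1 ≤ M) :
    IsLeast
      {J : ℝ | ∃ w u : ℕ → ℝ, u 0 = 0 ∧
        (∀ k, 1 ≤ k → u k = a * u (k - 1) + w k) ∧
        (∃ k, 1 ≤ k ∧ k ≤ M ∧ 1 ≤ |u k|) ∧
        J = (1 / 2) * ∑ k ∈ Finset.Icc 1 M, (w k) ^ 2}
      (1 / (2 * ∑ k ∈ Finset.range M, a ^ (2 * k))) := by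
  set S : ℝ := ∑ k ∈ Finset.range M, a ^ (2 * k) with hS_def
  have hterm : ∀ k, (0:ℝ) ≤ a ^ (2 * k) := fun k => by
    rw [pow_mul]; positivity
  have hS1 : (1:ℝ) ≤ S := by
    have := Finset.single_le_sum (f := fun k => a ^ (2 * k))
      (fun i _ => hterm i) (Finset.mem_range.mpr hM)
    simpa using this
  have hSpos : (0:ℝ) < S := lt_of_lt_of_le one_pos hS1
  constructor
  · -- membership: the optimal control
    refine ⟨fun j => a ^ (M - j) / S,
      fun k => ∑ j ∈ Finset.Icc 1 k, a ^ (k - j) * (a ^ (M - j) / S), by simp, ?_, ?_, ?_⟩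
    · intro k hk
      exact sum_rec a _ k hk
    · refine ⟨M, hM, le_refl M, ?_⟩
      have huM : ∑ j ∈ Finset.Icc 1 M, a ^ (M - j) * (a ^ (M - j) / S) = 1 := by
        have : ∀ j ∈ Finset.Icc 1 M,
            a ^ (M - j) * (a ^ (M - j) / S) = a ^ (2 * (M - j)) / S := by
          intro j _
          rw [two_mul, pow_add]
          ring
        rw [Finset.sum_congr rfl this, ← Finset.sum_div, sum_reindex]
        exact div_self (ne_of_gt hSpos)
      simp only []
      show (1:ℝ) ≤ |∑ j ∈ Finset.Icc 1 M, a ^ (M - j) * (a ^ (M - j) / S)|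
      rw [huM]; simp
    · have : ∀ j ∈ Finset.Icc 1 M,
          (a ^ (M - j) / S) ^ 2 = a ^ (2 * (M - j)) / S ^ 2 := by
        intro j _
        rw [div_pow, ← pow_mul, mul_comm (M - j) 2]
      rw [Finset.sum_congr rfl this, ← Finset.sum_div, sum_reindex, ← hS_def]
      field_simp
  · -- lower bound
    rintro J ⟨w, u, h0, hrec, ⟨k, hk1, hkM, hku⟩, rfl⟩
    have hu := u_closed a w u h0 hrec k
    have h1 : (1:ℝ) ≤ (u k) ^ 2 := by
      nlinarith [sq_abs (u k), abs_nonneg (u k)]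
    have hCS := Finset.sum_mul_sq_le_sq_mul_sq (Finset.Icc 1 k)
      (fun j => a ^ (k - j)) w
    have hA : ∑ j ∈ Finset.Icc 1 k, (a ^ (k - j)) ^ 2 ≤ S := by
      have heq : ∀ j ∈ Finset.Icc 1 k, (a ^ (k - j)) ^ 2 = a ^ (2 * (k - j)) := by
        intro j _; rw [← pow_mul, mul_comm]
      rw [Finset.sum_congr rfl heq, sum_reindex]
      exact Finset.sum_le_sum_of_subset_of_nonneg
        (Finset.range_subset_range.mpr hkM) (fun i _ _ => hterm i)
    have hB : ∑ j ∈ Finset.Icc 1 k, (w j) ^ 2 ≤ ∑ j ∈ Finset.Icc 1 M, (w j) ^ 2 := by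
      exact Finset.sum_le_sum_of_subset_of_nonneg
        (Finset.Icc_subset_Icc_right hkM) (fun i _ _ => sq_nonneg _)
    have hQk : (0:ℝ) ≤ ∑ j ∈ Finset.Icc 1 k, (w j) ^ 2 :=
      Finset.sum_nonneg fun i _ => sq_nonneg _
    have hkey : 1 ≤ S * ∑ j ∈ Finset.Icc 1 M, (w j) ^ 2 := by
      calc (1:ℝ) ≤ (u k) ^ 2 := h1
        _ ≤ (∑ j ∈ Finset.Icc 1 k, (a ^ (k - j)) ^ 2)
              * ∑ j ∈ Finset.Icc 1 k, (w j) ^ 2 := by rw [hu]; exact hCS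
        _ ≤ S * ∑ j ∈ Finset.Icc 1 M, (w j) ^ 2 := by
            apply mul_le_mul hA hB hQk (le_of_lt hSpos)
    rw [div_le_iff₀ (by positivity)]
    linarith
end
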